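/- arXiv:2003.10475 — 3 statements merged into one kernel-verified Lean document; each statement's English description precedes it below -/
import Mathlib

section
/- Let K be a positive integer and let σ : ℝ → ℂ be a 2π-periodic integrable function satisfying σ(θ) = σ(-θ), with Fourier coefficients σ_j = (1/2π) ∫_{-π}^{π} σ(θ) e^{-i j θ} dθ. Write f for the function on [-1,1] defined by f(cos θ) = σ(θ), and for a weight w on (-1,1) let D_K(w) = det( ∫_{-1}^{1} x^{j+k-2} w(x) dx )_{j,k=1}^{K}. Then: (i) det( σ_{j-k} + σ_{j+k-1} )_{j,k=1}^{K} = (2^{K²} / (2π)^K) · D_K( f(x) · √((1+x)/(1-x)) ); and (ii) det( σ_{j-k} - σ_{j+k-1} )_{j,k=1}^{K} = (2^{K²} / (2π)^K) · D_K( f(x) · √((1-x)/(1+x)) ). -/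
open MeasureTheory

/-- Fourier coefficients `σ_j = (1/2π) ∫_{-π}^{π} σ(θ) e^{-ijθ} dθ` of a symbol. -/
noncomputable def fourierCoeffZ (σ : ℝ → ℂ) (n : ℤ) : ℂ :=
  (1 / (2 * (Real.pi : ℂ))) * ∫ θ in (-Real.pi)..Real.pi,
    σ θ * Complex.exp (-Complex.I * (n : ℂ) * (θ : ℂ))

/-- Hankel determinant of moments of a weight `w` on `(-1, 1)`:
`D_K(w) = det( ∫_{-1}^1 x^{j+k-2} w(x) dx )_{j,k=1}^K`. -/
noncomputable def hankelDet (K : ℕ) (w : ℝ → ℂ) : ℂ :=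
  Matrix.det (Matrix.of fun j k : Fin K =>
    ∫ x in (-1 : ℝ)..1, (x : ℂ) ^ ((j : ℕ) + (k : ℕ)) * w x)

/-!
Write `x = cos θ` and `P = V` (resp. `W`), the Chebyshev polynomials of the third (resp. fourth)
kind. They satisfy `V n (cos 2φ) cos φ = cos ((2n+1)φ)` and `W n (cos 2φ) sin φ = sin ((2n+1)φ)`,
so the product formulas for `cos a cos b` and `sin a sin b` give
`cos ((j-k)θ) ± cos ((j+k+1)θ) = (1 ± cos θ) P j (cos θ) P k (cos θ)`.
As `σ` is even, `σ_m = (1/π) ∫₀^π σ(θ) cos (mθ) dθ`, so the Toeplitz±Hankel matrix is `1/π` times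
the Gram matrix of `P 0, …, P (K-1)` for the functional `p ↦ ∫₀^π σ(θ) (1 ± cos θ) p(cos θ) dθ`.
Since `P n` has degree `n` and leading coefficient `2^n`, this Gram determinant is `2^(K(K-1))`
times the Hankel determinant of the moments of the functional, and the substitution `x = cos θ`,
with `sin θ · √((1 ± cos θ)/(1 ∓ cos θ)) = 1 ± cos θ`, identifies those moments with the moments of
`f(x) √((1 ± x)/(1 ∓ x))` on `[-1, 1]`.
-/

open Polynomial Real Set intervalIntegral

theorem prod_pow_sq_mul_pow {M : Type*} [CommMonoid M] (a : M) (K : ℕ) :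
    (∏ j : Fin K, a ^ (j : ℕ)) ^ 2 * a ^ K = a ^ (K ^ 2) := by
  rw [Finset.prod_pow_eq_pow_sum, ← pow_mul, ← pow_add, Fin.sum_univ_eq_sum_range (fun j => j),
    Finset.sum_range_id_mul_two]
  cases K with
  | zero => rfl
  | succ K => congr 1; simp only [Nat.add_sub_cancel]; ring

theorem det_gram_eq_sq_prod_coeff_mul_det_moments {R A : Type*} [CommRing R] [CommRing A]
    [Algebra R A] (L : R[X] →ₗ[R] A) {P : ℕ → R[X]} (hP : ∀ n, (P n).natDegree ≤ n) (K : ℕ) :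
    (Matrix.of fun j k : Fin K => L (P j * P k)).det =
      algebraMap R A (∏ j : Fin K, (P j).coeff j) ^ 2 *
        (Matrix.of fun m n : Fin K => L (X ^ (m + n : ℕ))).det := by
  set C : Matrix (Fin K) (Fin K) A := Matrix.of fun j m => algebraMap R A ((P j).coeff m)
  have hC : C.det = algebraMap R A (∏ j : Fin K, (P j).coeff j) := by
    rw [Matrix.det_of_isLowerTriangular C fun j m (hjm : j < m) => ?_, map_prod]
    · rfl
    · simp [C, coeff_eq_zero_of_natDegree_lt ((hP j).trans_lt hjm)]
  have hexpand (i : Fin K) : P i = ∑ m : Fin K, Polynomial.C ((P i).coeff m) * X ^ (m : ℕ) := by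
    rw [Fin.sum_univ_eq_sum_range (fun m => Polynomial.C ((P i).coeff m) * X ^ m)]
    exact as_sum_range_C_mul_X_pow' _ ((hP i).trans_lt i.isLt)
  have hfactor : Matrix.of (fun j k : Fin K => L (P j * P k)) =
      C * Matrix.of (fun m n : Fin K => L (X ^ (m + n : ℕ))) * C.transpose := by
    ext j k
    rw [Matrix.of_apply, hexpand j, hexpand k, Finset.sum_mul_sum]
    simp only [Matrix.mul_apply, Matrix.transpose_apply, Matrix.of_apply, C, map_sum,
      Finset.sum_mul]
    rw [Finset.sum_comm]
    refine Finset.sum_congr rfl fun m _ => Finset.sum_congr rfl fun n _ => ?_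
    rw [mul_mul_mul_comm, ← C_mul, pow_add, ← smul_eq_C_mul, map_smul, Algebra.smul_def, map_mul]
    ring
  rw [hfactor, Matrix.det_mul, Matrix.det_mul, Matrix.det_transpose, hC]
  ring

theorem integral_neg_eq_integral_add_comp_neg {E : Type*} [NormedAddCommGroup E]
    [NormedSpace ℝ E] {f : ℝ → E} {a : ℝ} (hf : IntervalIntegrable f volume (-a) a) :
    ∫ x in -a..a, f x = ∫ x in 0..a, (f x + f (-x)) := by
  have h0 : (0 : ℝ) ∈ uIcc (-a) a := by
    rcases le_total 0 a with h | h <;> simp [h]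
  have hl := hf.mono_set (uIcc_subset_uIcc left_mem_uIcc h0)
  have hr := hf.mono_set (uIcc_subset_uIcc h0 right_mem_uIcc)
  have hl' : IntervalIntegrable (fun x => f (-x)) volume 0 a := by
    simpa using (IntervalIntegrable.iff_comp_neg (by finiteness)).mp hl.symm
  rw [← integral_add_adjacent_intervals hl hr, integral_add hr hl', integral_comp_neg, neg_zero,
    add_comm]

theorem integral_sin_smul_comp_cos (g : ℝ → ℂ) :
    ∫ θ in 0..π, sin θ • g (cos θ) = ∫ x in (-1)..1, g x := by
  rw [integral_of_le pi_pos.le, integral_of_le (by norm_num), ← integral_Icc_eq_integral_Ioc,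
    ← integral_Icc_eq_integral_Ioc, ← bijOn_cos.image_eq,
    integral_image_eq_integral_abs_deriv_smul measurableSet_Icc
      (fun θ _ => (hasDerivAt_cos θ).hasDerivWithinAt) injOn_cos]
  refine setIntegral_congr_fun measurableSet_Icc fun θ hθ => ?_
  rw [abs_neg, abs_of_nonneg (sin_nonneg_of_nonneg_of_le_pi hθ.1 hθ.2)]

theorem mul_sqrt_div_eq {s c ε : ℝ} (hs : 0 < s) (hsc : s ^ 2 + c ^ 2 = 1) (hε : ε ^ 2 = 1) :
    s * √((1 + ε * c) / (1 - ε * c)) = 1 + ε * c := by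
  have hprod : (1 - ε * c) * (1 + ε * c) = s ^ 2 := by
    linear_combination -hsc - c ^ 2 * hε
  have hminus : 0 < 1 - ε * c := by nlinarith
  have hplus : 0 < 1 + ε * c := by nlinarith
  rw [← sqrt_sq hs.le, ← sqrt_mul (sq_nonneg s), ← hprod,
    show (1 - ε * c) * (1 + ε * c) * ((1 + ε * c) / (1 - ε * c)) = (1 + ε * c) ^ 2 by
      field_simp,
    sqrt_sq hplus.le]

namespace Polynomial.Chebyshev

variable (R : Type*) [CommRing R]

/-- Chebyshev polynomials of the third kind. -/
noncomputable def V (n : ℕ) : R[X] := U R n - U R (n - 1)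

/-- Chebyshev polynomials of the fourth kind. -/
noncomputable def W (n : ℕ) : R[X] := U R n + U R (n - 1)

@[simp]
theorem V_zero : V R 0 = 1 := by simp [V]

@[simp]
theorem V_one : V R 1 = 2 * X - 1 := by simp [V]

@[simp]
theorem W_zero : W R 0 = 1 := by simp [W]

@[simp]
theorem W_one : W R 1 = 2 * X + 1 := by simp [W]

theorem V_add_two (n : ℕ) : V R (n + 2) = 2 * X * V R (n + 1) - V R n := by
  simp only [V]
  push_cast
  rw [show (n : ℤ) + 2 - 1 = n + 1 by ring, show (n : ℤ) + 1 - 1 = n by ring, U_add_two,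
    U_add_one]
  ring

theorem W_add_two (n : ℕ) : W R (n + 2) = 2 * X * W R (n + 1) - W R n := by
  simp only [W]
  push_cast
  rw [show (n : ℤ) + 2 - 1 = n + 1 by ring, show (n : ℤ) + 1 - 1 = n by ring, U_add_two,
    U_add_one]
  ring

theorem eval_mul_eq_of_add_two {S : Type*} [CommRing S] {p : ℕ → S[X]} {u : ℕ → S} {x s : S}
    (hp : ∀ n, p (n + 2) = 2 * X * p (n + 1) - p n) (hu : ∀ n, u (n + 2) = 2 * x * u (n + 1) - u n)
    (h0 : (p 0).eval x * s = u 0) (h1 : (p 1).eval x * s = u 1) :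
    ∀ n, (p n).eval x * s = u n
  | 0 => h0
  | 1 => h1
  | n + 2 => by
    rw [hp, hu, ← eval_mul_eq_of_add_two hp hu h0 h1 n,
      ← eval_mul_eq_of_add_two hp hu h0 h1 (n + 1)]
    simp only [eval_sub, eval_mul, eval_X, eval_ofNat]
    ring

theorem V_real_cos_two_mul (φ : ℝ) (n : ℕ) :
    (V ℝ n).eval (cos (2 * φ)) * cos φ = cos ((2 * n + 1) * φ) := by
  refine eval_mul_eq_of_add_two (u := fun n : ℕ => cos ((2 * n + 1) * φ)) (V_add_two ℝ)
    (fun n => ?_) (by simp) ?_ n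
  · push_cast
    rw [show (2 * ((n : ℝ) + 2) + 1) * φ = (2 * (n + 1) + 1) * φ + 2 * φ by ring,
      show (2 * (n : ℝ) + 1) * φ = (2 * (n + 1) + 1) * φ - 2 * φ by ring, cos_add, cos_sub]
    ring
  · simp only [V_one, eval_sub, eval_mul, eval_X, eval_ofNat, eval_one, Nat.cast_one]
    rw [show (2 * 1 + 1) * φ = 3 * φ by ring, cos_three_mul, cos_two_mul]
    ring

theorem W_real_cos_two_mul (φ : ℝ) (n : ℕ) :
    (W ℝ n).eval (cos (2 * φ)) * sin φ = sin ((2 * n + 1) * φ) := by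
  refine eval_mul_eq_of_add_two (u := fun n : ℕ => sin ((2 * n + 1) * φ)) (W_add_two ℝ)
    (fun n => ?_) (by simp) ?_ n
  · push_cast
    rw [show (2 * ((n : ℝ) + 2) + 1) * φ = (2 * (n + 1) + 1) * φ + 2 * φ by ring,
      show (2 * (n : ℝ) + 1) * φ = (2 * (n + 1) + 1) * φ - 2 * φ by ring, sin_add, sin_sub]
    ring
  · simp only [W_one, eval_add, eval_mul, eval_X, eval_ofNat, eval_one, Nat.cast_one]
    rw [show (2 * 1 + 1) * φ = 3 * φ by ring, sin_three_mul, cos_two_mul]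
    linear_combination (4 * sin φ) * sin_sq_add_cos_sq φ

theorem cos_add_cos_eq_one_add_cos_mul_V (j k : ℕ) (θ : ℝ) :
    cos ((j - k) * θ) + cos ((j + k + 1) * θ) =
      (1 + cos θ) * ((V ℝ j).eval (cos θ) * (V ℝ k).eval (cos θ)) := by
  obtain ⟨φ, rfl⟩ : ∃ φ, θ = 2 * φ := ⟨θ / 2, by ring⟩
  have hj := V_real_cos_two_mul φ j
  have hk := V_real_cos_two_mul φ k
  rw [show ((j : ℝ) - k) * (2 * φ) = (2 * j + 1) * φ - (2 * k + 1) * φ by ring,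
    show ((j : ℝ) + k + 1) * (2 * φ) = (2 * j + 1) * φ + (2 * k + 1) * φ by ring,
    cos_sub, cos_add]
  have hc : 1 + cos (2 * φ) = 2 * cos φ ^ 2 := by rw [cos_two_mul]; ring
  linear_combination (-2 * cos ((2 * k + 1) * φ)) * hj -
    2 * (V ℝ j).eval (cos (2 * φ)) * cos φ * hk -
    (V ℝ j).eval (cos (2 * φ)) * (V ℝ k).eval (cos (2 * φ)) * hc

theorem cos_sub_cos_eq_one_sub_cos_mul_W (j k : ℕ) (θ : ℝ) :
    cos ((j - k) * θ) - cos ((j + k + 1) * θ) =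
      (1 - cos θ) * ((W ℝ j).eval (cos θ) * (W ℝ k).eval (cos θ)) := by
  obtain ⟨φ, rfl⟩ : ∃ φ, θ = 2 * φ := ⟨θ / 2, by ring⟩
  have hj := W_real_cos_two_mul φ j
  have hk := W_real_cos_two_mul φ k
  rw [show ((j : ℝ) - k) * (2 * φ) = (2 * j + 1) * φ - (2 * k + 1) * φ by ring,
    show ((j : ℝ) + k + 1) * (2 * φ) = (2 * j + 1) * φ + (2 * k + 1) * φ by ring,
    cos_sub, cos_add]
  have hs : 1 - cos (2 * φ) = 2 * sin φ ^ 2 := by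
    rw [cos_two_mul]; linear_combination (-2) * sin_sq_add_cos_sq φ
  linear_combination (-2 * sin ((2 * k + 1) * φ)) * hj -
    2 * (W ℝ j).eval (cos (2 * φ)) * sin φ * hk -
    (W ℝ j).eval (cos (2 * φ)) * (W ℝ k).eval (cos (2 * φ)) * hs

variable [IsDomain R] [NeZero (2 : R)]

theorem degree_U_sub_one_lt (n : ℕ) : (U R (n - 1)).degree < n := by
  cases n with
  | zero => simp
  | succ m =>
    simp only [Nat.cast_add, Nat.cast_one, add_sub_cancel_right, degree_U_natCast]
    exact_mod_cast m.lt_succ_self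

theorem coeff_U_self (n : ℕ) : (U R n).coeff n = 2 ^ n := by
  rw [← leadingCoeff_U_natCast R n, leadingCoeff, natDegree_U_natCast]

theorem natDegree_V_le (n : ℕ) : (V R n).natDegree ≤ n :=
  natDegree_sub_le_of_le (natDegree_U_natCast R n).le
    (natDegree_le_iff_degree_le.mpr (degree_U_sub_one_lt R n).le) |>.trans (max_self n).le

theorem natDegree_W_le (n : ℕ) : (W R n).natDegree ≤ n :=
  natDegree_add_le_of_degree_le (natDegree_U_natCast R n).le
    (natDegree_le_iff_degree_le.mpr (degree_U_sub_one_lt R n).le)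

theorem coeff_V_self (n : ℕ) : (V R n).coeff n = 2 ^ n := by
  rw [V, coeff_sub, coeff_U_self, coeff_eq_zero_of_degree_lt (degree_U_sub_one_lt R n), sub_zero]

theorem coeff_W_self (n : ℕ) : (W R n).coeff n = 2 ^ n := by
  rw [W, coeff_add, coeff_U_self, coeff_eq_zero_of_degree_lt (degree_U_sub_one_lt R n), add_zero]

end Polynomial.Chebyshev

theorem fourierCoeffZ_eq_integral_cos {σ : ℝ → ℂ} (hint : IntervalIntegrable σ volume (-π) π)
    (hsym : ∀ θ, σ (-θ) = σ θ) (n : ℤ) :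
    fourierCoeffZ σ n = 1 / π * ∫ θ in 0..π, σ θ * (cos (n * θ) : ℝ) := by
  have hexp (θ : ℝ) : σ θ * Complex.exp (-Complex.I * n * θ) +
      σ (-θ) * Complex.exp (-Complex.I * n * (-θ : ℝ)) = 2 * (σ θ * (cos (n * θ) : ℝ)) := by
    rw [hsym, ← mul_add, mul_left_comm, Complex.ofReal_cos, Complex.two_cos, add_comm]
    congr 3 <;> push_cast <;> ring
  rw [fourierCoeffZ, integral_neg_eq_integral_add_comp_neg (hint.mul_continuousOn (by fun_prop)),
    integral_congr fun θ _ => hexp θ, intervalIntegral.integral_const_mul]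
  ring

noncomputable def integralEvalCos (r : ℝ → ℂ) {a b : ℝ} (hr : IntervalIntegrable r volume a b) :
    ℝ[X] →ₗ[ℝ] ℂ where
  toFun p := ∫ θ in a..b, r θ * ((p.eval (cos θ) : ℝ) : ℂ)
  map_add' p q := by
    simp only [eval_add, Complex.ofReal_add, mul_add]
    exact integral_add (hr.mul_continuousOn (by fun_prop)) (hr.mul_continuousOn (by fun_prop))
  map_smul' c p := by
    simp only [eval_smul, smul_eq_mul, Complex.ofReal_mul, RingHom.id_apply, Complex.real_smul,
      ← intervalIntegral.integral_const_mul, mul_left_comm]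

theorem integralEvalCos_apply (r : ℝ → ℂ) {a b : ℝ} (hr : IntervalIntegrable r volume a b)
    (p : ℝ[X]) : integralEvalCos r hr p = ∫ θ in a..b, r θ * ((p.eval (cos θ) : ℝ) : ℂ) :=
  rfl

theorem fourierCoeffZ_add_mul_fourierCoeffZ_eq {σ : ℝ → ℂ}
    (hint : IntervalIntegrable σ volume (-π) π) (hsym : ∀ θ, σ (-θ) = σ θ) {P : ℕ → ℝ[X]} {ε : ℝ}
    (hprod : ∀ (j k : ℕ) (θ : ℝ), cos ((j - k) * θ) + ε * cos ((j + k + 1) * θ) =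
      (1 + ε * cos θ) * ((P j).eval (cos θ) * (P k).eval (cos θ)))
    (hr : IntervalIntegrable (fun θ => σ θ * (1 + ε * cos θ : ℝ)) volume 0 π) (j k : ℕ) :
    fourierCoeffZ σ (j - k) + ε * fourierCoeffZ σ (j + k + 1) =
      1 / π * integralEvalCos _ hr (P j * P k) := by
  have hσ : IntervalIntegrable σ volume 0 π :=
    hint.mono_set (uIcc_subset_uIcc (by simp [pi_pos.le]) right_mem_uIcc)
  rw [fourierCoeffZ_eq_integral_cos hint hsym, fourierCoeffZ_eq_integral_cos hint hsym,
    integralEvalCos_apply, mul_left_comm, ← mul_add, ← intervalIntegral.integral_const_mul,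
    ← integral_add (hσ.mul_continuousOn (by fun_prop))
      ((hσ.mul_continuousOn (by fun_prop)).const_mul _)]
  congr 1
  refine integral_congr fun θ _ => ?_
  rw [eval_mul, mul_assoc, ← Complex.ofReal_mul, ← hprod j k θ]
  push_cast
  ring

theorem integralEvalCos_X_pow {σ f : ℝ → ℂ} (hf : ∀ θ, f (cos θ) = σ θ) {ε : ℝ} (hε : ε ^ 2 = 1)
    (hr : IntervalIntegrable (fun θ => σ θ * (1 + ε * cos θ : ℝ)) volume 0 π) (n : ℕ) :
    integralEvalCos _ hr (X ^ n) =
      ∫ x in (-1)..1, (x : ℂ) ^ n * (f x * (√((1 + ε * x) / (1 - ε * x)) : ℝ)) := by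
  rw [← integral_sin_smul_comp_cos, integralEvalCos_apply, integral_of_le pi_pos.le,
    integral_of_le pi_pos.le, integral_Ioc_eq_integral_Ioo, integral_Ioc_eq_integral_Ioo]
  refine setIntegral_congr_fun measurableSet_Ioo fun θ hθ => ?_
  have hw : (sin θ : ℂ) * (√((1 + ε * cos θ) / (1 - ε * cos θ)) : ℝ) = (1 + ε * cos θ : ℝ) := by
    rw [← Complex.ofReal_mul,
      mul_sqrt_div_eq (sin_pos_of_pos_of_lt_pi hθ.1 hθ.2) (sin_sq_add_cos_sq θ) hε]
  rw [hf, Complex.real_smul, eval_pow, eval_X, Complex.ofReal_pow]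
  linear_combination (-(σ θ * (cos θ : ℂ) ^ n)) * hw

theorem det_toeplitz_add_hankel_eq_hankelDet {σ f : ℝ → ℂ} (K : ℕ)
    (hint : IntervalIntegrable σ volume (-π) π) (hsym : ∀ θ, σ (-θ) = σ θ)
    (hf : ∀ θ, f (cos θ) = σ θ) {P : ℕ → ℝ[X]} {ε : ℝ} (hε : ε ^ 2 = 1)
    (hdeg : ∀ n, (P n).natDegree ≤ n) (hcoeff : ∀ n, (P n).coeff n = 2 ^ n)
    (hprod : ∀ (j k : ℕ) (θ : ℝ), cos ((j - k) * θ) + ε * cos ((j + k + 1) * θ) =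
      (1 + ε * cos θ) * ((P j).eval (cos θ) * (P k).eval (cos θ))) :
    (Matrix.of fun j k : Fin K =>
        fourierCoeffZ σ ((j : ℤ) - (k : ℤ)) + ε * fourierCoeffZ σ ((j : ℤ) + (k : ℤ) + 1)).det =
      2 ^ (K ^ 2) / (2 * π) ^ K *
        hankelDet K (fun x => f x * (√((1 + ε * x) / (1 - ε * x)) : ℝ)) := by
  have hr : IntervalIntegrable (fun θ => σ θ * (1 + ε * cos θ : ℝ)) volume 0 π :=
    (hint.mono_set (uIcc_subset_uIcc (by simp [pi_pos.le]) right_mem_uIcc)).mul_continuousOn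
      (by fun_prop)
  set L := integralEvalCos _ hr
  have hentries : (Matrix.of fun j k : Fin K =>
      fourierCoeffZ σ ((j : ℤ) - (k : ℤ)) + ε * fourierCoeffZ σ ((j : ℤ) + (k : ℤ) + 1)) =
      (1 / π : ℂ) • Matrix.of fun j k : Fin K => L (P j * P k) := by
    ext j k
    exact fourierCoeffZ_add_mul_fourierCoeffZ_eq hint hsym hprod hr j k
  have hmoments : hankelDet K (fun x => f x * (√((1 + ε * x) / (1 - ε * x)) : ℝ)) =
      (Matrix.of fun m n : Fin K => L (X ^ (m + n : ℕ))).det := by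
    unfold hankelDet
    congr
    ext m n
    exact (integralEvalCos_X_pow hf hε hr _).symm
  rw [hentries, Matrix.det_smul, det_gram_eq_sq_prod_coeff_mul_det_moments L hdeg, hmoments,
    Fintype.card_fin]
  simp only [hcoeff, map_prod, map_pow, map_ofNat]
  rw [← prod_pow_sq_mul_pow (2 : ℂ) K]
  rw [one_div, inv_pow, mul_pow]
  field_simp

theorem dik_lemma_odd_general (K : ℕ) (σ : ℝ → ℂ) (f : ℝ → ℂ)
    (hint : IntervalIntegrable σ volume (-Real.pi) Real.pi)
    (hsym : ∀ θ : ℝ, σ (-θ) = σ θ)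
    (hf : ∀ θ : ℝ, f (Real.cos θ) = σ θ) :
    Matrix.det (Matrix.of fun j k : Fin K =>
        fourierCoeffZ σ ((j : ℤ) - (k : ℤ)) + fourierCoeffZ σ ((j : ℤ) + (k : ℤ) + 1))
      = ((2 : ℂ) ^ (K ^ 2) / (2 * (Real.pi : ℂ)) ^ K) *
          hankelDet K (fun x => f x * ((Real.sqrt ((1 + x) / (1 - x)) : ℝ) : ℂ))
    ∧ Matrix.det (Matrix.of fun j k : Fin K =>
        fourierCoeffZ σ ((j : ℤ) - (k : ℤ)) - fourierCoeffZ σ ((j : ℤ) + (k : ℤ) + 1))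
      = ((2 : ℂ) ^ (K ^ 2) / (2 * (Real.pi : ℂ)) ^ K) *
          hankelDet K (fun x => f x * ((Real.sqrt ((1 - x) / (1 + x)) : ℝ) : ℂ)) := by
  constructor
  · simpa using det_toeplitz_add_hankel_eq_hankelDet K hint hsym hf (ε := 1) (by norm_num)
      (Chebyshev.natDegree_V_le ℝ) (Chebyshev.coeff_V_self ℝ) fun j k θ => by
        simpa using Chebyshev.cos_add_cos_eq_one_add_cos_mul_V j k θ
  · simpa [← sub_eq_add_neg] using det_toeplitz_add_hankel_eq_hankelDet K hint hsym hf (ε := -1)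
      (by norm_num) (Chebyshev.natDegree_W_le ℝ) (Chebyshev.coeff_W_self ℝ) fun j k θ => by
        simpa [← sub_eq_add_neg] using Chebyshev.cos_sub_cos_eq_one_sub_cos_mul_W j k θ

/-- The two `odd` identities of Lemma 2.7 of Deift–Its–Krasovsky, relating
Toeplitz±Hankel determinants (integrals over `O⁻(2K+1)` and `O⁺(2K+1)`) to Hankel
determinants of moments of weights on `[-1,1]` under the substitution `x = cos θ`. -/
theorem dik_lemma_odd (K : ℕ) (hK : 0 < K) (σ : ℝ → ℂ) (f : ℝ → ℂ)
    (hper : Function.Periodic σ (2 * Real.pi))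
    (hint : IntervalIntegrable σ volume (-Real.pi) Real.pi)
    (hsym : ∀ θ : ℝ, σ (-θ) = σ θ)
    (hf : ∀ θ : ℝ, f (Real.cos θ) = σ θ) :
    Matrix.det (Matrix.of fun j k : Fin K =>
        fourierCoeffZ σ ((j : ℤ) - (k : ℤ)) + fourierCoeffZ σ ((j : ℤ) + (k : ℤ) + 1))
      = ((2 : ℂ) ^ (K ^ 2) / (2 * (Real.pi : ℂ)) ^ K) *
          hankelDet K (fun x => f x * ((Real.sqrt ((1 + x) / (1 - x)) : ℝ) : ℂ))
    ∧ Matrix.det (Matrix.of fun j k : Fin K =>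
        fourierCoeffZ σ ((j : ℤ) - (k : ℤ)) - fourierCoeffZ σ ((j : ℤ) + (k : ℤ) + 1))
      = ((2 : ℂ) ^ (K ^ 2) / (2 * (Real.pi : ℂ)) ^ K) *
          hankelDet K (fun x => f x * ((Real.sqrt ((1 - x) / (1 + x)) : ℝ) : ℂ)) :=
  dik_lemma_odd_general K σ f hint hsym hf
end

section
/- Fix γ > 0 and a real number v with -1 < v < 1, and for 0 < t < 1 define ΔF_w(t) = γ² log(1 - t²) and ΔF_s(t) = log(1 + t) - (1/2) log t. Then at every point t ∈ (0,1) with γ = (1-t)/(2t) one has ΔF_w'(t) = ΔF_s'(t), while v² ( ΔF_w''(t) - ΔF_s''(t) ) = -v² / ( t² (1 + t) ). -/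
/-! On the critical curve `γ = (1 - t) / (2t)` one has `γ² / (1 - t²) = (1 - t) / (4t²(1 + t))`.
This turns `ΔF_w' = -2γ²t / (1 - t²)` into `1 / (2t) - 1 / (1 + t) = ΔF_s'`, and
`ΔF_w'' = -2γ²(1 + t²) / (1 - t²)²` into `-(1 + t²) / (2t²(1 + t)²)`, which differs from
`ΔF_s'' = 1 / (2t²) - 1 / (1 + t)²` by `-1 / (t²(1 + t))`. -/

open Real Filter Topology

theorem iteratedDeriv_two_eq_of_hasDerivAt {f f' : ℝ → ℝ} {x a : ℝ}
    (hf : ∀ᶠ y in 𝓝 x, HasDerivAt f (f' y) y) (hf' : HasDerivAt f' a x) :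
    iteratedDeriv 2 f x = a := by
  rw [iteratedDeriv_succ, iteratedDeriv_one]
  have hderiv : deriv f =ᶠ[𝓝 x] f' := hf.mono fun y hy => hy.deriv
  exact hderiv.deriv_eq.trans hf'.deriv

section WeakCoupling

variable (c : ℝ) {s : ℝ}

theorem hasDerivAt_const_mul_log_one_sub_sq (hs : 1 - s ^ 2 ≠ 0) :
    HasDerivAt (fun s => c * log (1 - s ^ 2)) (c * (-2 * s / (1 - s ^ 2))) s := by
  have h : HasDerivAt (fun s : ℝ => 1 - s ^ 2) (-2 * s) s := by
    simpa using (hasDerivAt_pow 2 s).const_sub 1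
  simpa only [neg_mul, neg_div] using (h.log hs).const_mul c

theorem hasDerivAt_const_mul_neg_two_mul_div_one_sub_sq (hs : 1 - s ^ 2 ≠ 0) :
    HasDerivAt (fun s => c * (-2 * s / (1 - s ^ 2)))
      (c * (-2 * (1 + s ^ 2) / (1 - s ^ 2) ^ 2)) s := by
  have hden : HasDerivAt (fun s : ℝ => 1 - s ^ 2) (-2 * s) s := by
    simpa using (hasDerivAt_pow 2 s).const_sub 1
  have hnum : HasDerivAt (fun s : ℝ => -2 * s) (-2) s := by
    simpa using (hasDerivAt_id s).const_mul (-2 : ℝ)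
  exact ((hnum.fun_div hden hs).const_mul c).congr_deriv (by ring)

theorem iteratedDeriv_two_const_mul_log_one_sub_sq (hs : 1 - s ^ 2 ≠ 0) :
    iteratedDeriv 2 (fun s => c * log (1 - s ^ 2)) s
      = c * (-2 * (1 + s ^ 2) / (1 - s ^ 2) ^ 2) := by
  have hnear : ∀ᶠ y in 𝓝 s, 1 - y ^ 2 ≠ 0 :=
    (by fun_prop : Continuous fun y : ℝ => 1 - y ^ 2).continuousAt.eventually_ne hs
  exact iteratedDeriv_two_eq_of_hasDerivAt
    (hnear.mono fun y hy => hasDerivAt_const_mul_log_one_sub_sq c hy)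
    (hasDerivAt_const_mul_neg_two_mul_div_one_sub_sq c hs)

end WeakCoupling

section StrongCoupling

variable {s : ℝ}

theorem hasDerivAt_log_one_add_sub_half_log (h0 : s ≠ 0) (h1 : 1 + s ≠ 0) :
    HasDerivAt (fun s => log (1 + s) - 1 / 2 * log s) ((1 + s)⁻¹ - 1 / 2 * s⁻¹) s := by
  have h : HasDerivAt (fun s : ℝ => 1 + s) 1 s := (hasDerivAt_id s).const_add 1
  simpa using (h.log h1).fun_sub ((hasDerivAt_log h0).const_mul (1 / 2 : ℝ))

theorem hasDerivAt_inv_one_add_sub_half_inv (h0 : s ≠ 0) (h1 : 1 + s ≠ 0) :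
    HasDerivAt (fun s => (1 + s)⁻¹ - 1 / 2 * s⁻¹) (-((1 + s) ^ 2)⁻¹ + 1 / 2 * (s ^ 2)⁻¹) s := by
  have h : HasDerivAt (fun s : ℝ => 1 + s) 1 s := (hasDerivAt_id s).const_add 1
  exact ((h.fun_inv h1).fun_sub ((hasDerivAt_inv h0).const_mul (1 / 2 : ℝ))).congr_deriv
    (by ring)

theorem iteratedDeriv_two_log_one_add_sub_half_log (h0 : s ≠ 0) (h1 : 1 + s ≠ 0) :
    iteratedDeriv 2 (fun s => log (1 + s) - 1 / 2 * log s) s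
      = -((1 + s) ^ 2)⁻¹ + 1 / 2 * (s ^ 2)⁻¹ := by
  have hnear : ∀ᶠ y in 𝓝 s, y ≠ 0 ∧ 1 + y ≠ 0 :=
    (eventually_ne_nhds h0).and
      ((by fun_prop : Continuous fun y : ℝ => 1 + y).continuousAt.eventually_ne h1)
  exact iteratedDeriv_two_eq_of_hasDerivAt
    (hnear.mono fun y hy => hasDerivAt_log_one_add_sub_half_log hy.1 hy.2)
    (hasDerivAt_inv_one_add_sub_half_inv h0 h1)

end StrongCoupling

theorem emodel_general_second_order_transition_general (γ v : ℝ) (t : ℝ)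
    (ht : t ∈ Set.Ioo (0 : ℝ) 1) (hc : γ = (1 - t) / (2 * t)) :
    deriv (fun s : ℝ => γ ^ 2 * Real.log (1 - s ^ 2)) t
        = deriv (fun s : ℝ => Real.log (1 + s) - (1 / 2) * Real.log s) t
    ∧ v ^ 2 * (iteratedDeriv 2 (fun s : ℝ => γ ^ 2 * Real.log (1 - s ^ 2)) t
          - iteratedDeriv 2 (fun s : ℝ => Real.log (1 + s) - (1 / 2) * Real.log s) t)
      = -v ^ 2 / (t ^ 2 * (1 + t)) := by
  obtain ⟨ht0, ht1⟩ := ht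
  have hw : 1 - t ^ 2 ≠ 0 := by nlinarith
  have h0 : t ≠ 0 := ht0.ne'
  have h1 : 1 + t ≠ 0 := by linarith
  constructor
  · rw [(hasDerivAt_const_mul_log_one_sub_sq _ hw).deriv,
      (hasDerivAt_log_one_add_sub_half_log h0 h1).deriv, hc]
    field_simp
    ring
  · rw [iteratedDeriv_two_const_mul_log_one_sub_sq _ hw,
      iteratedDeriv_two_log_one_add_sub_half_log h0 h1, hc]
    field_simp
    ring

/-- Second-order phase transition of the non-symmetric E-model: across the critical curve
`γ = (1-t)/(2t)` the weak- and strong-coupling corrections `ΔF` to the free energy agree to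
first order in `t`, while (weighted by `v²`) the second `t`-derivatives jump by
`-v²/(t²(1+t))`. -/
theorem emodel_general_second_order_transition (γ v : ℝ) (hγ : 0 < γ)
    (hv1 : -1 < v) (hv2 : v < 1) (t : ℝ)
    (ht : t ∈ Set.Ioo (0 : ℝ) 1) (hc : γ = (1 - t) / (2 * t)) :
    deriv (fun s : ℝ => γ ^ 2 * Real.log (1 - s ^ 2)) t
        = deriv (fun s : ℝ => Real.log (1 + s) - (1 / 2) * Real.log s) t
    ∧ v ^ 2 * (iteratedDeriv 2 (fun s : ℝ => γ ^ 2 * Real.log (1 - s ^ 2)) t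
          - iteratedDeriv 2 (fun s : ℝ => Real.log (1 + s) - (1 / 2) * Real.log s) t)
      = -v ^ 2 / (t ^ 2 * (1 + t)) :=
  emodel_general_second_order_transition_general γ v t ht hc
end

section
/- Let 0 < t < 1 and γ > (1+t)/(2t), let φ₀ ∈ (0, π) satisfy sin²(φ₀/2) = (1-t)²(2γ-1) / (4t(γ-1)²), and define the strong-coupling density ρ_H(φ) = (2(γ-1)t/π) · [ cos(φ/2) / ( (1-t)² + 4t sin²(φ/2) ) ] · √( sin²(φ₀/2) - sin²(φ/2) ) on [-φ₀, φ₀]. Then ∫_{-φ₀}^{φ₀} ρ_H(φ) · [ 2 (cos φ - t) / ( 1 + t² - 2t cos φ ) ] dφ = ( 4γt - 1 - t ) / ( 2γt(1 - t) ). -/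
/-!
Substitute `s = sin (φ / 2)`. Then `cos φ - t = 1 - t - 2 s²` and
`1 + t² - 2 t cos φ = (1 - t)² + 4 t s² = 4 t (a² + s²)` with `a = (1 - t) / (2 √t)`, so the
integral becomes a combination of `∫_{-c}^{c} √(c² - s²) / (a² + s²)^k ds` for `k = 1, 2`,
where `c = sin (φ₀ / 2)`. Both have elementary antiderivatives built from `arcsin (s / c)`,
`arcsin (s √(a² + c²) / (c √(a² + s²)))` and `s √(c² - s²) / (a² + s²)`, which take the values
`± π / 2` and `0` at `s = ± c`. The condition defining `φ₀` says exactly that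
`√(a² + c²) = a γ / (γ - 1)`.
-/

open Real intervalIntegral Set MeasureTheory

lemma HasDerivAt.arcsin_of_one_sub_sq_eq_sq {u : ℝ → ℝ} {u' w x : ℝ} (hu : HasDerivAt u u' x)
    (hw : 0 < w) (h : 1 - u x ^ 2 = w ^ 2) :
    HasDerivAt (fun y ↦ arcsin (u y)) (u' / w) x := by
  have hlt : u x ^ 2 < 1 := by nlinarith
  have hne_one : u x ≠ 1 := fun h1 ↦ by simp [h1] at hlt
  have hne_neg_one : u x ≠ -1 := fun h1 ↦ by simp [h1] at hlt
  have hcomp := (hasDerivAt_arcsin hne_neg_one hne_one).comp x hu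
  rwa [h, sqrt_sq hw.le, one_div_mul_eq_div] at hcomp

section ArcsinIntegrals

variable {a c x : ℝ}

lemma hasDerivAt_arcsin_div (hc : 0 < c) (hx : x ^ 2 < c ^ 2) :
    HasDerivAt (fun y ↦ arcsin (y / c)) (1 / √(c ^ 2 - x ^ 2)) x := by
  have hS : 0 < √(c ^ 2 - x ^ 2) := sqrt_pos.2 (by linarith)
  refine (((hasDerivAt_id' x).div_const c).arcsin_of_one_sub_sq_eq_sq (div_pos hS hc) ?_).congr_deriv
    (by field_simp)
  rw [div_pow, div_pow, sq_sqrt (by linarith)]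
  field_simp

lemma hasDerivAt_arcsin_mul_sqrt_div (ha : 0 < a) (hc : 0 < c) (hx : x ^ 2 < c ^ 2) :
    HasDerivAt (fun y ↦ arcsin (y * √(a ^ 2 + c ^ 2) / (c * √(a ^ 2 + y ^ 2))))
      (a * √(a ^ 2 + c ^ 2) / (√(c ^ 2 - x ^ 2) * (a ^ 2 + x ^ 2))) x := by
  have hA : 0 < a ^ 2 + x ^ 2 := by positivity
  have hS : 0 < √(c ^ 2 - x ^ 2) := sqrt_pos.2 (by linarith)
  have hsqA := sq_sqrt hA.le
  have hsqR := sq_sqrt (by positivity : 0 ≤ a ^ 2 + c ^ 2)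
  have hsqS := sq_sqrt (by linarith : 0 ≤ c ^ 2 - x ^ 2)
  have hden := (((hasDerivAt_pow 2 x).const_add (a ^ 2)).sqrt hA.ne').const_mul c
  have hu := ((hasDerivAt_id' x).mul_const √(a ^ 2 + c ^ 2)).fun_div hden (by positivity)
  have h := hu.arcsin_of_one_sub_sq_eq_sq (w := a * √(c ^ 2 - x ^ 2) / (c * √(a ^ 2 + x ^ 2)))
    (by positivity) <| by
    field_simp
    rw [hsqA, hsqR, hsqS]
    ring
  refine h.congr_deriv ?_
  field_simp
  rw [hsqA]
  ring

lemma hasDerivAt_mul_sqrt_div (ha : a ≠ 0) (hx : x ^ 2 < c ^ 2) :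
    HasDerivAt (fun y ↦ y * √(c ^ 2 - y ^ 2) / (a ^ 2 + y ^ 2))
      ((a ^ 2 * c ^ 2 - c ^ 2 * x ^ 2 - 2 * a ^ 2 * x ^ 2) /
        (√(c ^ 2 - x ^ 2) * (a ^ 2 + x ^ 2) ^ 2)) x := by
  have hA : 0 < a ^ 2 + x ^ 2 := by positivity
  have hcx : 0 < c ^ 2 - x ^ 2 := by linarith
  have hS : 0 < √(c ^ 2 - x ^ 2) := sqrt_pos.2 hcx
  have h := ((hasDerivAt_id' x).fun_mul
    (((hasDerivAt_pow 2 x).const_sub (c ^ 2)).sqrt hcx.ne')).fun_div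
      ((hasDerivAt_pow 2 x).const_add (a ^ 2)) hA.ne'
  refine h.congr_deriv ?_
  norm_num
  field_simp
  rw [sq_sqrt hcx.le]
  ring

lemma arcsin_mul_sqrt_div_self (hc : 0 < c) :
    arcsin (c * √(a ^ 2 + c ^ 2) / (c * √(a ^ 2 + c ^ 2))) = π / 2 := by
  rw [div_self (by positivity), arcsin_one]

theorem integral_sqrt_sq_sub_sq_div_sq_add_sq (ha : 0 < a) (hc : 0 < c) :
    ∫ x in -c..c, √(c ^ 2 - x ^ 2) / (a ^ 2 + x ^ 2) = π * (√(a ^ 2 + c ^ 2) - a) / a := by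
  have hderiv : ∀ x ∈ Ioo (-c) c, HasDerivAt
      (fun y ↦ √(a ^ 2 + c ^ 2) / a * arcsin (y * √(a ^ 2 + c ^ 2) / (c * √(a ^ 2 + y ^ 2)))
        - arcsin (y / c))
      (√(c ^ 2 - x ^ 2) / (a ^ 2 + x ^ 2)) x := by
    intro x hx
    have hx2 : x ^ 2 < c ^ 2 := sq_lt_sq' hx.1 hx.2
    have hS : 0 < √(c ^ 2 - x ^ 2) := sqrt_pos.2 (by linarith)
    refine (((hasDerivAt_arcsin_mul_sqrt_div ha hc hx2).const_mul _).sub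
      (hasDerivAt_arcsin_div hc hx2)).congr_deriv ?_
    field_simp
    rw [sq_sqrt (by positivity), sq_sqrt (by linarith)]
    ring
  rw [integral_eq_sub_of_hasDerivAt_of_le (by linarith)
    (by fun_prop (disch := intro y; positivity)) hderiv
    (Continuous.intervalIntegrable (by fun_prop (disch := intro y; positivity)) _ _)]
  simp only [neg_sq, neg_mul, neg_div, div_self hc.ne', arcsin_neg, arcsin_one,
    arcsin_mul_sqrt_div_self hc]
  field_simp
  ring

theorem integral_sqrt_sq_sub_sq_div_sq_add_sq_sq (ha : 0 < a) (hc : 0 < c) :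
    ∫ x in -c..c, √(c ^ 2 - x ^ 2) / (a ^ 2 + x ^ 2) ^ 2
      = π * c ^ 2 / (2 * a ^ 3 * √(a ^ 2 + c ^ 2)) := by
  have hderiv : ∀ x ∈ Ioo (-c) c, HasDerivAt
      (fun y ↦ c ^ 2 / (2 * a ^ 3 * √(a ^ 2 + c ^ 2)) *
          arcsin (y * √(a ^ 2 + c ^ 2) / (c * √(a ^ 2 + y ^ 2)))
        + 1 / (2 * a ^ 2) * (y * √(c ^ 2 - y ^ 2) / (a ^ 2 + y ^ 2)))
      (√(c ^ 2 - x ^ 2) / (a ^ 2 + x ^ 2) ^ 2) x := by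
    intro x hx
    have hx2 : x ^ 2 < c ^ 2 := sq_lt_sq' hx.1 hx.2
    have hS : 0 < √(c ^ 2 - x ^ 2) := sqrt_pos.2 (by linarith)
    refine (((hasDerivAt_arcsin_mul_sqrt_div ha hc hx2).const_mul _).add
      ((hasDerivAt_mul_sqrt_div ha.ne' hx2).const_mul _)).congr_deriv ?_
    field_simp
    rw [sq_sqrt (by linarith)]
    ring
  rw [integral_eq_sub_of_hasDerivAt_of_le (by linarith)
    (by fun_prop (disch := intro y; positivity)) hderiv
    (Continuous.intervalIntegrable (by fun_prop (disch := intro y; positivity)) _ _)]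
  simp only [neg_sq, neg_mul, neg_div, arcsin_neg, arcsin_mul_sqrt_div_self hc, sub_self,
    sqrt_zero, mul_zero, zero_div]
  field_simp
  ring

theorem integral_mul_sqrt_sq_sub_sq_div_sq_add_sq_sq (ha : 0 < a) (hc : 0 < c) (B : ℝ) :
    ∫ x in -c..c, (B - 2 * (a ^ 2 + x ^ 2)) * √(c ^ 2 - x ^ 2) / (a ^ 2 + x ^ 2) ^ 2
      = π * (B * c ^ 2 / (2 * a ^ 3 * √(a ^ 2 + c ^ 2)) - 2 * (√(a ^ 2 + c ^ 2) - a) / a) := by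
  have hsplit : ∀ x, (B - 2 * (a ^ 2 + x ^ 2)) * √(c ^ 2 - x ^ 2) / (a ^ 2 + x ^ 2) ^ 2
      = B * (√(c ^ 2 - x ^ 2) / (a ^ 2 + x ^ 2) ^ 2) - 2 * (√(c ^ 2 - x ^ 2) / (a ^ 2 + x ^ 2)) :=
    fun x ↦ by field_simp
  have hint₁ : IntervalIntegrable (fun x ↦ √(c ^ 2 - x ^ 2) / (a ^ 2 + x ^ 2)) volume (-c) c :=
    Continuous.intervalIntegrable (by fun_prop (disch := intro y; positivity)) _ _
  have hint₂ : IntervalIntegrable (fun x ↦ √(c ^ 2 - x ^ 2) / (a ^ 2 + x ^ 2) ^ 2) volume (-c) c :=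
    Continuous.intervalIntegrable (by fun_prop (disch := intro y; positivity)) _ _
  simp_rw [hsplit]
  rw [integral_sub (hint₂.const_mul _) (hint₁.const_mul _), intervalIntegral.integral_const_mul,
    intervalIntegral.integral_const_mul, integral_sqrt_sq_sub_sq_div_sq_add_sq ha hc,
    integral_sqrt_sq_sub_sq_div_sq_add_sq_sq ha hc]
  ring

end ArcsinIntegrals

lemma integral_comp_sin_half_mul_cos_half {g : ℝ → ℝ} (hg : Continuous g) (u v : ℝ) :
    ∫ φ in u..v, g (sin (φ / 2)) * (cos (φ / 2) / 2) = ∫ s in sin (u / 2)..sin (v / 2), g s :=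
  integral_comp_mul_deriv (f := fun φ ↦ sin (φ / 2))
    (fun φ _ ↦ ((hasDerivAt_id' φ).div_const 2).sin.congr_deriv (by ring)) (by fun_prop) hg

lemma cos_eq_one_sub_two_mul_sin_half_sq (x : ℝ) : cos x = 1 - 2 * sin (x / 2) ^ 2 := by
  have h : cos (2 * (x / 2)) = 1 - 2 * sin (x / 2) ^ 2 := by rw [cos_two_mul, cos_sq']; ring
  rwa [mul_div_cancel₀ x two_ne_zero] at h

lemma hmodel_integrand_eq {t a : ℝ} (γ c φ : ℝ) (ht : 0 < t) (ha : a ≠ 0)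
    (ha2 : a ^ 2 = (1 - t) ^ 2 / (4 * t)) :
    (2 * (γ - 1) * t / π) * (cos (φ / 2) / ((1 - t) ^ 2 + 4 * t * sin (φ / 2) ^ 2)) *
        √(c ^ 2 - sin (φ / 2) ^ 2) * (2 * (cos φ - t) / (1 + t ^ 2 - 2 * t * cos φ))
      = (γ - 1) / (2 * π * t) * ((1 - t + 2 * a ^ 2 - 2 * (a ^ 2 + sin (φ / 2) ^ 2)) *
          √(c ^ 2 - sin (φ / 2) ^ 2) / (a ^ 2 + sin (φ / 2) ^ 2) ^ 2) * (cos (φ / 2) / 2) := by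
  have hD : (1 - t) ^ 2 + 4 * t * sin (φ / 2) ^ 2 = 4 * t * (a ^ 2 + sin (φ / 2) ^ 2) := by
    rw [ha2]; field_simp
  rw [cos_eq_one_sub_two_mul_sin_half_sq φ,
    show 1 + t ^ 2 - 2 * t * (1 - 2 * sin (φ / 2) ^ 2) = (1 - t) ^ 2 + 4 * t * sin (φ / 2) ^ 2 by
      ring,
    hD]
  field_simp
  ring

/-- Integral of the kernel `2(cos φ - t)/(1 + t² - 2t cos φ)` against the gapped
eigenvalue density of the symmetric H-model: it equals `(4γt - 1 - t)/(2γt(1-t))`. -/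
theorem hmodel_strong_coupling_free_energy_integral (t γ φ₀ : ℝ)
    (ht0 : 0 < t) (ht1 : t < 1) (hγ : (1 + t) / (2 * t) < γ)
    (hφ : φ₀ ∈ Set.Ioo 0 Real.pi)
    (hφ0 : Real.sin (φ₀ / 2) ^ 2 = (1 - t) ^ 2 * (2 * γ - 1) / (4 * t * (γ - 1) ^ 2)) :
    (∫ φ in (-φ₀)..φ₀,
        ((2 * (γ - 1) * t / Real.pi) *
            (Real.cos (φ / 2) / ((1 - t) ^ 2 + 4 * t * Real.sin (φ / 2) ^ 2)) *
            Real.sqrt (Real.sin (φ₀ / 2) ^ 2 - Real.sin (φ / 2) ^ 2)) *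
          (2 * (Real.cos φ - t) / (1 + t ^ 2 - 2 * t * Real.cos φ)))
      = (4 * γ * t - 1 - t) / (2 * γ * t * (1 - t)) := by
  have hγ1 : 0 < γ - 1 := by
    rw [div_lt_iff₀ (by positivity)] at hγ
    nlinarith
  have hγ0 : 0 < γ := by linarith
  set c := sin (φ₀ / 2)
  have hc : 0 < c := sin_pos_of_pos_of_lt_pi (by linarith [hφ.1]) (by linarith [hφ.2, pi_pos])
  obtain ⟨a, ha, ha2⟩ : ∃ a : ℝ, 0 < a ∧ a ^ 2 = (1 - t) ^ 2 / (4 * t) :=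
    ⟨(1 - t) / (2 * √t), by positivity, by rw [div_pow, mul_pow, sq_sqrt ht0.le]; ring⟩
  have hc2 : c ^ 2 = a ^ 2 * (2 * γ - 1) / (γ - 1) ^ 2 := by
    rw [hφ0, ha2]; field_simp
  have hR : √(a ^ 2 + c ^ 2) = a * γ / (γ - 1) := by
    rw [← sqrt_sq (show 0 ≤ a * γ / (γ - 1) by positivity), hc2]
    congr 1
    field_simp
    ring
  set g : ℝ → ℝ := fun s ↦ (γ - 1) / (2 * π * t) *
    ((1 - t + 2 * a ^ 2 - 2 * (a ^ 2 + s ^ 2)) * √(c ^ 2 - s ^ 2) / (a ^ 2 + s ^ 2) ^ 2)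
  have hg : Continuous g := by fun_prop (disch := intro y; positivity)
  calc _ = ∫ φ in -φ₀..φ₀, g (sin (φ / 2)) * (cos (φ / 2) / 2) :=
        integral_congr fun φ _ ↦ hmodel_integrand_eq γ c φ ht0 ha.ne' ha2
    _ = ∫ s in -c..c, g s := by rw [integral_comp_sin_half_mul_cos_half hg, neg_div, sin_neg]
    _ = (4 * γ * t - 1 - t) / (2 * γ * t * (1 - t)) := by
        rw [intervalIntegral.integral_const_mul,
          integral_mul_sqrt_sq_sub_sq_div_sq_add_sq_sq ha hc, hR, hc2]
        field_simp
        rw [ha2]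
        field_simp
        ring
end
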